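/- arXiv:1603.06036 — 2 statements merged into one kernel-verified Lean document; each statement's English description precedes it below -/
import Mathlib

section
/- Let g : X → Y be a measurable injective map between metric spaces equipped with their Borel σ-algebras, let μ be a measure on X, and let F ⊆ X be a measurable set with μ(X \ F) = 0 (μ is supported on F). Assume c₁·dist(x,y) ≤ dist(g(x),g(y)) ≤ c₂·dist(x,y) for all x, y ∈ F with 0 < c₁ ≤ c₂, and assume g(F ∩ closedBall(x, r)) is measurable for each x ∈ F, r > 0. Then for every x ∈ F and r > 0, the pushforward measure ν = g_*μ satisfies μ(closedBall(x, r/c₂)) ≤ ν(closedBall(g(x), r)) ≤ μ(closedBall(x, r/c₁)). -/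
open Metric MeasureTheory

/-- Measure-comparison step of the bi-Lipschitz invariance proof: if `g` is a measurable
injective map, bi-Lipschitz on `F` with constants `0 < c₁ ≤ c₂`, `μ` is supported on the
measurable set `F`, and images of intersections of `F` with closed balls are measurable,
then the pushforward measure `ν = g_* μ` of a ball around `g x` is sandwiched between
`μ`-measures of rescaled balls around `x`. -/
theorem biLipschitz_pushforward_ball_measure {X Y : Type*}
    [MetricSpace X] [MetricSpace Y] [MeasurableSpace X] [MeasurableSpace Y]
    [BorelSpace X] [BorelSpace Y]
    (g : X → Y) (hgm : Measurable g) (hginj : Function.Injective g)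
    (μ : Measure X) (F : Set X) (hF : MeasurableSet F) (hμF : μ (Set.univ \ F) = 0)
    (c₁ c₂ : ℝ) (hc₁ : 0 < c₁) (hc₁₂ : c₁ ≤ c₂)
    (hg : ∀ x ∈ F, ∀ y ∈ F,
      c₁ * dist x y ≤ dist (g x) (g y) ∧ dist (g x) (g y) ≤ c₂ * dist x y)
    (himg : ∀ x ∈ F, ∀ r : ℝ, 0 < r → MeasurableSet (g '' (F ∩ closedBall x r))) :
    ∀ x ∈ F, ∀ r : ℝ, 0 < r →
      μ (closedBall x (r / c₂)) ≤ (Measure.map g μ) (closedBall (g x) r) ∧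
      (Measure.map g μ) (closedBall (g x) r) ≤ μ (closedBall x (r / c₁)) := by
  intro x hx r hr
  have hc₂ : 0 < c₂ := lt_of_lt_of_le hc₁ hc₁₂
  rw [Measure.map_apply hgm measurableSet_closedBall]
  -- μ A = μ (A ∩ F) trick
  have key : ∀ A : Set X, μ A ≤ μ (A ∩ F) := by
    intro A
    calc μ A ≤ μ ((A ∩ F) ∪ (Set.univ \ F)) := by
          apply measure_mono
          intro y hy
          by_cases hyF : y ∈ F
          · exact Or.inl ⟨hy, hyF⟩
          · exact Or.inr ⟨trivial, hyF⟩
      _ ≤ μ (A ∩ F) + μ (Set.univ \ F) := measure_union_le _ _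
      _ = μ (A ∩ F) := by rw [hμF, add_zero]
  constructor
  · calc μ (closedBall x (r / c₂)) ≤ μ (closedBall x (r / c₂) ∩ F) := key _
      _ ≤ μ (g ⁻¹' closedBall (g x) r) := by
          apply measure_mono
          rintro y ⟨hyb, hyF⟩
          have := (hg x hx y hyF).2
          simp only [Set.mem_preimage, mem_closedBall] at *
          rw [dist_comm]
          calc dist (g x) (g y) ≤ c₂ * dist x y := this
            _ = c₂ * dist y x := by rw [dist_comm]
            _ ≤ c₂ * (r / c₂) := by
                exact mul_le_mul_of_nonneg_left hyb hc₂.le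
            _ = r := by field_simp
  · calc μ (g ⁻¹' closedBall (g x) r) ≤ μ (g ⁻¹' closedBall (g x) r ∩ F) := key _
      _ ≤ μ (closedBall x (r / c₁)) := by
          apply measure_mono
          rintro y ⟨hyb, hyF⟩
          have := (hg x hx y hyF).1
          simp only [Set.mem_preimage, mem_closedBall] at *
          rw [dist_comm] at hyb
          have h1 : c₁ * dist x y ≤ r := this.trans hyb
          rw [dist_comm]
          rw [le_div_iff₀ hc₁, mul_comm]
          exact h1
end

section
/- Let D, L, D_g, L_g be real numbers, let 0 < c₁ ≤ c₂, and let m, m_g : ℝ → ℝ be positive functions on (0,∞) satisfying the log-linear laws log m(r) = D·log(2r) + L and log m_g(r) = D_g·log(2r) + L_g for all r > 0, together with the sandwich inequalities m(r/c₂) ≤ m_g(r) ≤ m(r/c₁) for all r > 0. Then D_g = D and L − D·log c₂ ≤ L_g ≤ L − D·log c₁. -/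
lemma lin_le_const (a b : ℝ) (h : ∀ x : ℝ, a * x ≤ b) : a = 0 ∧ 0 ≤ b := by
  constructor
  · by_contra ha
    have := h ((b + 1) / a)
    rw [mul_div_cancel₀ _ ha] at this
    linarith
  · simpa using h 0

/-- Concluding step of the bi-Lipschitz invariance proof: if `m, m_g` are positive on
`(0,∞)` with log-linear laws `log m(r) = D·log(2r) + L` and `log m_g(r) = D_g·log(2r) + L_g`,
and `m(r/c₂) ≤ m_g(r) ≤ m(r/c₁)` for all `r > 0` with `0 < c₁ ≤ c₂`, then `D_g = D` and
`L − D·log c₂ ≤ L_g ≤ L − D·log c₁`. -/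
theorem loglinear_sandwich (D L D_g L_g c₁ c₂ : ℝ) (hc₁ : 0 < c₁) (hc₁₂ : c₁ ≤ c₂)
    (m m_g : ℝ → ℝ)
    (hm : ∀ r : ℝ, 0 < r → 0 < m r) (hmg : ∀ r : ℝ, 0 < r → 0 < m_g r)
    (hlaw : ∀ r : ℝ, 0 < r → Real.log (m r) = D * Real.log (2 * r) + L)
    (hlawg : ∀ r : ℝ, 0 < r → Real.log (m_g r) = D_g * Real.log (2 * r) + L_g)
    (hsand : ∀ r : ℝ, 0 < r → m (r / c₂) ≤ m_g r ∧ m_g r ≤ m (r / c₁)) :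
    D_g = D ∧ L - D * Real.log c₂ ≤ L_g ∧ L_g ≤ L - D * Real.log c₁ := by
  have hc₂ : 0 < c₂ := lt_of_lt_of_le hc₁ hc₁₂
  -- key pointwise inequalities in log form
  have key : ∀ x : ℝ, (D - D_g) * x ≤ L_g - L + D * Real.log c₂ ∧
      (D_g - D) * x ≤ L - L_g - D * Real.log c₁ := by
    intro x
    set r : ℝ := Real.exp x / 2 with hrdef
    have hr : 0 < r := by positivity
    have hlog2r : Real.log (2 * r) = x := by
      rw [hrdef]
      have : 2 * (Real.exp x / 2) = Real.exp x := by ring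
      rw [this, Real.log_exp]
    have hr2 : 0 < r / c₂ := by positivity
    have hr1 : 0 < r / c₁ := by positivity
    have h1 : Real.log (m (r / c₂)) ≤ Real.log (m_g r) :=
      Real.log_le_log (hm _ hr2) (hsand r hr).1
    have h2 : Real.log (m_g r) ≤ Real.log (m (r / c₁)) :=
      Real.log_le_log (hmg _ hr) (hsand r hr).2
    rw [hlaw _ hr2, hlawg _ hr] at h1
    rw [hlawg _ hr, hlaw _ hr1] at h2
    have e2 : Real.log (2 * (r / c₂)) = x - Real.log c₂ := by
      have : 2 * (r / c₂) = (2 * r) / c₂ := by ring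
      rw [this, Real.log_div (by positivity) (ne_of_gt hc₂), hlog2r]
    have e1 : Real.log (2 * (r / c₁)) = x - Real.log c₁ := by
      have : 2 * (r / c₁) = (2 * r) / c₁ := by ring
      rw [this, Real.log_div (by positivity) (ne_of_gt hc₁), hlog2r]
    rw [e2, hlog2r] at h1
    rw [e1, hlog2r] at h2
    constructor <;> nlinarith [h1, h2]
  have k1 := lin_le_const _ _ (fun x => (key x).1)
  have k2 := lin_le_const _ _ (fun x => (key x).2)
  have hD : D_g = D := by linarith [k1.1]
  refine ⟨hD, ?_, ?_⟩ <;> [linarith [k1.2]; linarith [k2.2]]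
end
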